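/- arXiv:2305.18071 — 2 statements merged into one kernel-verified Lean document; each statement's English description precedes it below -/
import Mathlib

section
/- For any finite sequence of opponent actions $a^{-i}_1,\dots,a^{-i}_T$ in an $N\times N$ bimatrix game with payoffs in $[0,1]$, the cumulative payoff of the best fixed action in hindsight, $\max_{a\in[N]}\sum_{t=1}^T G_i(a, a^{-i}_t)$, is at least the cumulative payoff of fictitious play with uniform tie-breaking, $\sum_{t=1}^T G_i(s^i_{fp,t}, a^{-i}_t)$. Equivalently, for any history $h$, the stochastic regret satisfies $R^{sto}_i(h) \le R^{ext}_i(h)$. -/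
open Finset

/-- Cumulative payoff of action `a` against the first `t` opponent actions. -/
noncomputable def cumPay {N : ℕ} (G : Fin N → Fin N → ℝ) (opp : ℕ → Fin N)
    (t : ℕ) (a : Fin N) : ℝ :=
  ∑ r ∈ Finset.range t, G a (opp r)

/-- The set of actions maximizing the cumulative payoff after `t` stages. -/
noncomputable def bestSet {N : ℕ} (G : Fin N → Fin N → ℝ) (opp : ℕ → Fin N)
    (t : ℕ) : Finset (Fin N) :=
  Finset.univ.filter (fun a => ∀ b : Fin N, cumPay G opp t b ≤ cumPay G opp t a)

/-- Fictitious play with uniform tie-breaking: the uniform distribution over the set of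
actions maximizing cumulative payoff against the first `t` opponent actions
(used as the strategy at stage `t+1`, i.e. given history of length `t`). -/
noncomputable def fp {N : ℕ} (G : Fin N → Fin N → ℝ) (opp : ℕ → Fin N)
    (t : ℕ) (a : Fin N) : ℝ :=
  if a ∈ bestSet G opp t then 1 / (bestSet G opp t).card else 0

/-- Expected payoff of a mixed strategy `s` against a pure opponent action `b`. -/
noncomputable def mixedPay {N : ℕ} (G : Fin N → Fin N → ℝ) (s : Fin N → ℝ)
    (b : Fin N) : ℝ :=
  ∑ a : Fin N, s a * G a b

/-!
Write `V t` for the best cumulative payoff of a fixed action over the first `t` rounds. If `a` is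
a leader after `t` rounds, i.e. `V t` is attained at `a`, then its payoff in round `t` is at most
`V (t+1) - V t`; fictitious play only mixes leaders, so its expected payoff in round `t` obeys the
same bound, and summing over the rounds telescopes to `V T`. Subtracting the realized payoffs from
both sides gives the statement about regrets.
-/

section BeTheLeader

variable {ι : Type*} (g : ℕ → ι → ℝ)

noncomputable def bestInHindsight (t : ℕ) : ℝ :=
  ⨆ a, ∑ r ∈ range t, g r a

lemma bestInHindsight_zero [Nonempty ι] : bestInHindsight g 0 = 0 := by
  simp [bestInHindsight]

lemma sum_range_le_bestInHindsight [Finite ι] (t : ℕ) (a : ι) :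
    ∑ r ∈ range t, g r a ≤ bestInHindsight g t :=
  le_ciSup (f := fun b => ∑ r ∈ range t, g r b) (Finite.bddAbove_range _) a

variable {g}

lemma bestInHindsight_eq_of_forall_le [Finite ι] [Nonempty ι] {t : ℕ} {a : ι}
    (ha : ∀ b, ∑ r ∈ range t, g r b ≤ ∑ r ∈ range t, g r a) :
    bestInHindsight g t = ∑ r ∈ range t, g r a :=
  le_antisymm (ciSup_le ha) (sum_range_le_bestInHindsight g t a)

lemma le_bestInHindsight_succ_sub_of_forall_le [Finite ι] [Nonempty ι] {t : ℕ} {a : ι}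
    (ha : ∀ b, ∑ r ∈ range t, g r b ≤ ∑ r ∈ range t, g r a) :
    g t a ≤ bestInHindsight g (t + 1) - bestInHindsight g t := by
  rw [bestInHindsight_eq_of_forall_le ha, le_sub_iff_add_le', ← sum_range_succ]
  exact sum_range_le_bestInHindsight g (t + 1) a

lemma expected_le_bestInHindsight_succ_sub [Fintype ι] [Nonempty ι] {t : ℕ} {s : ι → ℝ}
    (hs_nonneg : ∀ a, 0 ≤ s a) (hs_sum : ∑ a, s a = 1)
    (hs_leader : ∀ a, s a ≠ 0 → ∀ b, ∑ r ∈ range t, g r b ≤ ∑ r ∈ range t, g r a) :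
    ∑ a, s a * g t a ≤ bestInHindsight g (t + 1) - bestInHindsight g t := by
  calc ∑ a, s a * g t a
      ≤ ∑ a, s a * (bestInHindsight g (t + 1) - bestInHindsight g t) := by
        refine sum_le_sum fun a _ => ?_
        by_cases h : s a = 0
        · simp [h]
        · exact mul_le_mul_of_nonneg_left
            (le_bestInHindsight_succ_sub_of_forall_le (hs_leader a h)) (hs_nonneg a)
    _ = bestInHindsight g (t + 1) - bestInHindsight g t := by
        rw [← sum_mul, hs_sum, one_mul]

theorem sum_expected_le_bestInHindsight [Fintype ι] [Nonempty ι] {s : ℕ → ι → ℝ}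
    (hs_nonneg : ∀ t a, 0 ≤ s t a) (hs_sum : ∀ t, ∑ a, s t a = 1)
    (hs_leader : ∀ t a, s t a ≠ 0 → ∀ b, ∑ r ∈ range t, g r b ≤ ∑ r ∈ range t, g r a)
    (T : ℕ) :
    ∑ t ∈ range T, ∑ a, s t a * g t a ≤ bestInHindsight g T :=
  calc ∑ t ∈ range T, ∑ a, s t a * g t a
      ≤ ∑ t ∈ range T, (bestInHindsight g (t + 1) - bestInHindsight g t) :=
        sum_le_sum fun t _ =>
          expected_le_bestInHindsight_succ_sub (hs_nonneg t) (hs_sum t) (hs_leader t)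
    _ = bestInHindsight g T := by
        rw [sum_range_sub (bestInHindsight g), bestInHindsight_zero, sub_zero]

end BeTheLeader

section FictitiousPlay

variable {N : ℕ} (G : Fin N → Fin N → ℝ) (opp : ℕ → Fin N) (t : ℕ)

lemma bestSet_nonempty [Nonempty (Fin N)] : (bestSet G opp t).Nonempty := by
  obtain ⟨a, -, ha⟩ := exists_max_image univ (cumPay G opp t) univ_nonempty
  exact ⟨a, mem_filter.mpr ⟨mem_univ a, fun b => ha b (mem_univ b)⟩⟩

lemma fp_nonneg (a : Fin N) : 0 ≤ fp G opp t a := by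
  unfold fp
  split_ifs <;> positivity

lemma sum_fp [Nonempty (Fin N)] : ∑ a, fp G opp t a = 1 := by
  have hcard : ((bestSet G opp t).card : ℝ) ≠ 0 := by
    exact_mod_cast (bestSet_nonempty G opp t).card_ne_zero
  simp only [fp, sum_ite_mem, univ_inter, sum_const, nsmul_eq_mul]
  field_simp

variable {G opp t}

lemma cumPay_le_of_fp_ne_zero {a : Fin N} (ha : fp G opp t a ≠ 0) (b : Fin N) :
    cumPay G opp t b ≤ cumPay G opp t a := by
  by_cases hmem : a ∈ bestSet G opp t
  · exact (mem_filter.mp hmem).2 b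
  · simp [fp, hmem] at ha

end FictitiousPlay

theorem stochastic_regret_le_external_regret_general
    {N : ℕ} (G : Fin N → Fin N → ℝ)
    (opp act : ℕ → Fin N) (T : ℕ) :
    (∑ t ∈ Finset.range T, mixedPay G (fp G opp t) (opp t)
        ≤ ⨆ a : Fin N, ∑ t ∈ Finset.range T, G a (opp t)) ∧
    (∑ t ∈ Finset.range T,
        (mixedPay G (fp G opp t) (opp t) - G (act t) (opp t))
      ≤ ⨆ a : Fin N, ∑ t ∈ Finset.range T, (G a (opp t) - G (act t) (opp t))) := by
  have : Nonempty (Fin N) := ⟨opp 0⟩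
  have hfp : ∑ t ∈ range T, mixedPay G (fp G opp t) (opp t)
      ≤ ⨆ a : Fin N, ∑ t ∈ range T, G a (opp t) :=
    sum_expected_le_bestInHindsight (g := fun t a => G a (opp t)) (fp_nonneg G opp)
      (fun t => sum_fp G opp t) (fun _ _ ha => cumPay_le_of_fp_ne_zero ha) T
  refine ⟨hfp, ?_⟩
  simp only [sum_sub_distrib]
  rw [← ciSup_sub (Finite.bddAbove_range _)]
  exact sub_le_sub_right hfp _

/-- the best fixed action in hindsight accumulates at least as much payoff
as fictitious play with uniform tie-breaking; equivalently, the stochastic regret is at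
most the external regret. -/
theorem stochastic_regret_le_external_regret
    {N : ℕ} (hN : 0 < N) (G : Fin N → Fin N → ℝ)
    (hG : ∀ a b : Fin N, G a b ∈ Set.Icc (0 : ℝ) 1)
    (opp act : ℕ → Fin N) (T : ℕ) :
    (∑ t ∈ Finset.range T, mixedPay G (fp G opp t) (opp t)
        ≤ ⨆ a : Fin N, ∑ t ∈ Finset.range T, G a (opp t)) ∧
    (∑ t ∈ Finset.range T,
        (mixedPay G (fp G opp t) (opp t) - G (act t) (opp t))
      ≤ ⨆ a : Fin N, ∑ t ∈ Finset.range T, (G a (opp t) - G (act t) (opp t))) :=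
  stochastic_regret_le_external_regret_general G opp act T
end

section
/- The multiplicative weights (exponential weights) algorithm with learning rate $\eta = \sqrt{8\ln N / T}$, which maintains weights $w_{k,t+1} = w_{k,t}\exp(\eta\, G_i(k, a^{-i}_t))$ starting from uniform weights and plays the normalized weight distribution, guarantees that for any sequence of opponent actions over $T$ stages, the expected external regret satisfies $\bar R^{ext}_i(h_T) = \max_{k\in[N]}\sum_{t=1}^T [G_i(k, a^{-i}_t) - G_i(s^i_{mw,t}, a^{-i}_t)] \le \sqrt{(T/2)\ln N}$. -/
open Finset

/-- Multiplicative (exponential) weights: weight of action `k` at stage `t`,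
starting from uniform weights and multiplying by `exp (η · G k (opp t))`. -/
noncomputable def mwWeight {N : ℕ} (G : Fin N → Fin N → ℝ) (opp : ℕ → Fin N)
    (η : ℝ) : ℕ → Fin N → ℝ
  | 0, _ => 1
  | t + 1, k => mwWeight G opp η t k * Real.exp (η * G k (opp t))

/-- The multiplicative-weights mixed strategy at stage `t`: normalized weights. -/
noncomputable def mwStrat {N : ℕ} (G : Fin N → Fin N → ℝ) (opp : ℕ → Fin N)
    (η : ℝ) (t : ℕ) (k : Fin N) : ℝ :=
  mwWeight G opp η t k / ∑ j : Fin N, mwWeight G opp η t j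

/-!
Potential argument. Put `W_t = ∑ k, w_{k,t}`. Hoeffding's lemma, applied to the gain of an
action drawn from the current strategy, gives `W_{t+1} ≤ W_t · exp (η μ_t + η² / 8)` where `μ_t`
is the expected gain, so `log W_T ≤ log N + η ∑ μ_t + T η² / 8`. Since `w_{k,T} = exp (η ∑_t G k)`,
also `η ∑_t G k ≤ log W_T`; dividing by `η` and substituting `η = √(8 ln N / T)` gives the bound.
-/

open Real MeasureTheory ProbabilityTheory

theorem sum_mul_exp_le_exp_of_mem_Icc {ι : Type*} [Fintype ι] {p g : ι → ℝ} {a b : ℝ}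
    (hp : ∀ i, 0 ≤ p i) (hp1 : ∑ i, p i = 1) (hg : ∀ i, g i ∈ Set.Icc a b) (s : ℝ) :
    ∑ i, p i * exp (s * g i) ≤ exp (s * ∑ i, p i * g i + (b - a) ^ 2 * s ^ 2 / 8) := by
  let _ : MeasurableSpace ι := ⊤
  let P : PMF ι := PMF.ofFintype (fun i ↦ ENNReal.ofReal (p i)) <| by
    rw [← ENNReal.ofReal_sum_of_nonneg fun i _ ↦ hp i, hp1, ENNReal.ofReal_one]
  have hint (f : ι → ℝ) : ∫ i, f i ∂P.toMeasure = ∑ i, p i * f i := by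
    simp [P, PMF.integral_eq_sum, ENNReal.toReal_ofReal (hp _)]
  have hoeffding := (hasSubgaussianMGF_of_mem_Icc (μ := P.toMeasure) (X := g)
    measurable_from_top.aemeasurable (ae_of_all _ hg)).mgf_le s
  set m := ∑ i, p i * g i
  rw [mgf, hint, hint] at hoeffding
  have hsq : ((‖b - a‖₊ / 2 : NNReal) ^ 2 : ℝ) * s ^ 2 / 2 = (b - a) ^ 2 * s ^ 2 / 8 := by
    simp only [NNReal.coe_ofNat, NNReal.coe_div, coe_nnnorm, Real.norm_eq_abs, div_pow, sq_abs]
    ring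
  calc ∑ i, p i * exp (s * g i) = exp (s * m) * ∑ i, p i * exp (s * (g i - m)) := by
        rw [Finset.mul_sum]; congr 1 with i; rw [mul_left_comm, ← exp_add]; ring_nf
    _ ≤ exp (s * m) * exp ((b - a) ^ 2 * s ^ 2 / 8) := by gcongr; rwa [← hsq]
    _ = _ := by rw [← exp_add]

section MultiplicativeWeights

variable {N : ℕ} (G : Fin N → Fin N → ℝ) (opp : ℕ → Fin N) (η : ℝ)

theorem mwWeight_eq_exp (t : ℕ) (k : Fin N) :
    mwWeight G opp η t k = exp (η * ∑ s ∈ range t, G k (opp s)) := by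
  induction t with
  | zero => simp [mwWeight]
  | succ t ih => rw [mwWeight, ih, ← exp_add, sum_range_succ, mul_add]

theorem mwWeight_pos (t : ℕ) (k : Fin N) : 0 < mwWeight G opp η t k := by
  rw [mwWeight_eq_exp]; exact exp_pos _

theorem mwStrat_nonneg (t : ℕ) (k : Fin N) : 0 ≤ mwStrat G opp η t k :=
  div_nonneg (mwWeight_pos G opp η t k).le (sum_nonneg fun j _ ↦ (mwWeight_pos G opp η t j).le)

theorem sum_mwStrat [NeZero N] (t : ℕ) : ∑ k, mwStrat G opp η t k = 1 := by
  simp only [mwStrat, ← sum_div]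
  exact div_self (sum_pos (fun j _ ↦ mwWeight_pos G opp η t j) univ_nonempty).ne'

theorem sum_mwWeight_succ (t : ℕ) :
    ∑ k, mwWeight G opp η (t + 1) k =
      (∑ k, mwWeight G opp η t k) * ∑ k, mwStrat G opp η t k * exp (η * G k (opp t)) := by
  rw [mul_sum]
  refine sum_congr rfl fun k _ ↦ ?_
  have hW : ∑ j, mwWeight G opp η t j ≠ 0 :=
    (sum_pos (fun j _ ↦ mwWeight_pos G opp η t j) ⟨k, mem_univ k⟩).ne'
  rw [mwWeight, mwStrat]
  field_simp

theorem sum_mwWeight_le [NeZero N] (hG : ∀ a b, G a b ∈ Set.Icc (0 : ℝ) 1) (t : ℕ) :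
    ∑ k, mwWeight G opp η t k ≤
      N * exp (η * ∑ s ∈ range t, mixedPay G (mwStrat G opp η s) (opp s) + t * η ^ 2 / 8) := by
  induction t with
  | zero => simp [mwWeight]
  | succ t ih =>
    calc _ = _ := sum_mwWeight_succ G opp η t
      _ ≤ N * exp (η * ∑ s ∈ range t, mixedPay G (mwStrat G opp η s) (opp s) + t * η ^ 2 / 8) *
          exp (η * mixedPay G (mwStrat G opp η t) (opp t) + η ^ 2 / 8) := by
        gcongr ?_ * ?_
        · exact sum_nonneg fun k _ ↦ mul_nonneg (mwStrat_nonneg G opp η t k) (exp_pos _).le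
        · simpa [mixedPay, mul_comm η] using
            sum_mul_exp_le_exp_of_mem_Icc (mwStrat_nonneg G opp η t) (sum_mwStrat G opp η t)
              (fun k ↦ hG k (opp t)) η
      _ = _ := by rw [mul_assoc, ← exp_add, sum_range_succ]; push_cast; ring_nf

theorem mw_regret_mul_le (hG : ∀ a b, G a b ∈ Set.Icc (0 : ℝ) 1) (T : ℕ) (k : Fin N) :
    η * ∑ t ∈ range T, (G k (opp t) - mixedPay G (mwStrat G opp η t) (opp t)) ≤
      log N + T * η ^ 2 / 8 := by
  have : NeZero N := ⟨k.pos.ne'⟩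
  have hk : mwWeight G opp η T k ≤ ∑ j, mwWeight G opp η T j :=
    single_le_sum (fun j _ ↦ (mwWeight_pos G opp η T j).le) (mem_univ k)
  have hlog := log_le_log (mwWeight_pos G opp η T k) (hk.trans (sum_mwWeight_le G opp η hG T))
  rw [mwWeight_eq_exp, log_mul (Nat.cast_ne_zero.2 this.out) (exp_pos _).ne', log_exp,
    log_exp] at hlog
  rw [sum_sub_distrib, mul_sub]
  linarith

theorem mw_regret_le (hG : ∀ a b, G a b ∈ Set.Icc (0 : ℝ) 1) (hη : 0 < η) (T : ℕ) (k : Fin N) :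
    ∑ t ∈ range T, (G k (opp t) - mixedPay G (mwStrat G opp η t) (opp t)) ≤
      log N / η + T * η / 8 := by
  calc _ ≤ (log N + T * η ^ 2 / 8) / η := (le_div_iff₀' hη).2 (mw_regret_mul_le G opp η hG T k)
    _ = _ := by field_simp

end MultiplicativeWeights

theorem mixedPay_mwStrat_of_fin_one (G : Fin 1 → Fin 1 → ℝ) (opp : ℕ → Fin 1) (η : ℝ) (t : ℕ)
    (k b : Fin 1) : mixedPay G (mwStrat G opp η t) b = G k b := by
  simp [mixedPay, mwStrat, Subsingleton.elim k 0, (mwWeight_pos G opp η t 0).ne']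

theorem div_add_mul_div_eight_of_eq_sqrt {L T η : ℝ} (hL : 0 < L) (hT : 0 < T)
    (hη : η = √(8 * L / T)) : L / η + T * η / 8 = √(T / 2 * L) := by
  have hη0 : 0 < η := hη ▸ sqrt_pos.2 (by positivity)
  have hη2 : η ^ 2 = 8 * L / T := by rw [hη, sq_sqrt (by positivity)]
  rw [eq_comm, sqrt_eq_iff_mul_self_eq_of_pos (by positivity)]
  field_simp
  rw [hη2]
  field_simp
  ring

theorem mw_regret_bound_general
    {N : ℕ} (G : Fin N → Fin N → ℝ)
    (hG : ∀ a b : Fin N, G a b ∈ Set.Icc (0 : ℝ) 1)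
    (opp : ℕ → Fin N) (T : ℕ)
    (η : ℝ) (hη : η = Real.sqrt (8 * Real.log N / T)) :
    (⨆ k : Fin N, ∑ t ∈ Finset.range T,
        (G k (opp t) - mixedPay G (mwStrat G opp η t) (opp t)))
      ≤ Real.sqrt ((T / 2) * Real.log N) := by
  refine Real.iSup_le (fun k ↦ ?_) (sqrt_nonneg _)
  -- for `N = 1` or `T = 0` the learning rate is `0` and the regret is `0`
  obtain rfl | hN := eq_or_ne N 1
  · simp only [mixedPay_mwStrat_of_fin_one _ _ _ _ k, sub_self, sum_const_zero]
    positivity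
  obtain rfl | hT := T.eq_zero_or_pos
  · simp
  have hL : 0 < log N := log_pos (by norm_cast; have := k.pos; omega)
  have hT' : (0 : ℝ) < T := by exact_mod_cast hT
  have hη0 : 0 < η := hη ▸ sqrt_pos.2 (by positivity)
  calc _ ≤ log N / η + T * η / 8 := mw_regret_le G opp η hG hη0 T k
    _ = _ := div_add_mul_div_eight_of_eq_sqrt hL hT' hη

/-- multiplicative weights with learning rate `η = √(8 ln N / T)`
guarantees expected external regret at most `√((T/2) ln N)` against any sequence of
opponent actions. -/
theorem mw_regret_bound
    {N : ℕ} (hN : 0 < N) (G : Fin N → Fin N → ℝ)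
    (hG : ∀ a b : Fin N, G a b ∈ Set.Icc (0 : ℝ) 1)
    (opp : ℕ → Fin N) (T : ℕ) (hT : 0 < T)
    (η : ℝ) (hη : η = Real.sqrt (8 * Real.log N / T)) :
    (⨆ k : Fin N, ∑ t ∈ Finset.range T,
        (G k (opp t) - mixedPay G (mwStrat G opp η t) (opp t)))
      ≤ Real.sqrt ((T / 2) * Real.log N) :=
  mw_regret_bound_general G hG opp T η hη
end
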